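/- arXiv:1207.5650 — 4 statements merged into one kernel-verified Lean document; each statement's English description precedes it below -/
import Mathlib

section
/- Let f be differentiable on an open interval containing [a,b] (a < b) with f' integrable, q ≥ 1, and suppose |f'|^q is quasi-convex on [a,b]. Then the Simpson-type inequality holds: |(1/6)[f(a) + 4 f((a+b)/2) + f(b)] − (1/(b−a)) ∫_a^b f(x) dx| ≤ (5(b−a)/72) [ (max{|f'(a)|^q, |f'((a+b)/2)|^q})^(1/q) + (max{|f'(b)|^q, |f'((a+b)/2)|^q})^(1/q) ]. -/
/-!
Integrating by parts against the Peano kernel of Simpson's rule, `x - (5a + b)/6` on the left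
half of `[a, b]` and `x - (a + 5b)/6` on the right half, writes the Simpson error as
`(b - a)⁻¹ ∫ K f'`. On each half, quasi-convexity bounds `|f'|^q` by the larger of its values at
the two endpoints of that half, and `∫ |K| = 5(b - a)²/72` there.
-/

open MeasureTheory Set

theorem QuasiconvexOn.le_max_of_mem_uIcc {β : Type*} [LinearOrder β] {s : Set ℝ} {g : ℝ → β}
    (hg : QuasiconvexOn ℝ s g) {u v x : ℝ} (hu : u ∈ s) (hv : v ∈ s) (hx : x ∈ uIcc u v) :
    g x ≤ max (g u) (g v) :=
  ((hg _).ordConnected.uIcc_subset ⟨hu, le_max_left _ _⟩ ⟨hv, le_max_right _ _⟩ hx).2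

theorem abs_le_max_rpow_of_quasiconvexOn {s : Set ℝ} {g : ℝ → ℝ} {q : ℝ} (hq : 0 < q)
    (hg : QuasiconvexOn ℝ s fun x => |g x| ^ q) {u v x : ℝ} (hu : u ∈ s) (hv : v ∈ s)
    (hx : x ∈ uIcc u v) :
    |g x| ≤ (max (|g u| ^ q) (|g v| ^ q)) ^ (1 / q) := by
  rw [one_div, Real.le_rpow_inv_iff_of_pos (abs_nonneg _) (by positivity) hq]
  exact hg.le_max_of_mem_uIcc hu hv hx

theorem integral_abs_sub_of_mem_Icc {u v c : ℝ} (hc : c ∈ Icc u v) :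
    ∫ x in u..v, |x - c| = ((c - u) ^ 2 + (v - c) ^ 2) / 2 := by
  have hleft : ∫ x in u..c, |x - c| = ∫ x in u..c, (c - x) :=
    intervalIntegral.integral_congr fun x hx => by
      rw [uIcc_of_le hc.1] at hx
      simp only [abs_of_nonpos (sub_nonpos.2 hx.2), neg_sub]
  have hright : ∫ x in c..v, |x - c| = ∫ x in c..v, (x - c) :=
    intervalIntegral.integral_congr fun x hx => by
      rw [uIcc_of_le hc.2] at hx
      simp only [abs_of_nonneg (sub_nonneg.2 hx.1)]
  have hcont : Continuous fun x : ℝ => |x - c| := by fun_prop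
  rw [← intervalIntegral.integral_add_adjacent_intervals (hcont.intervalIntegrable u c)
    (hcont.intervalIntegrable c v), hleft, hright]
  simp only [intervalIntegral.integral_comp_sub_left fun x => x, sub_self, integral_id,
    intervalIntegral.integral_sub intervalIntegral.intervalIntegrable_id intervalIntegrable_const,
    intervalIntegral.integral_const, smul_eq_mul]
  ring

theorem integral_sub_mul_deriv_eq {f f' : ℝ → ℝ} {u v p : ℝ}
    (hf : ∀ x ∈ uIcc u v, HasDerivAt f (f' x) x) (hf' : IntervalIntegrable f' volume u v) :
    ∫ x in u..v, (x - p) * f' x = (v - p) * f v - (u - p) * f u - ∫ x in u..v, f x := by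
  simpa using intervalIntegral.integral_mul_deriv_eq_deriv_mul
    (fun x _ => (hasDerivAt_id x).sub_const p) hf intervalIntegrable_const hf'

theorem abs_integral_sub_mul_le {g : ℝ → ℝ} {u v p M : ℝ} (huv : u ≤ v)
    (hg : ∀ x ∈ Icc u v, |g x| ≤ M) :
    |∫ x in u..v, (x - p) * g x| ≤ M * ∫ x in u..v, |x - p| := by
  have hbound : Continuous fun x => M * |x - p| := by fun_prop
  rw [← Real.norm_eq_abs, ← intervalIntegral.integral_const_mul]
  refine intervalIntegral.norm_integral_le_of_norm_le huv
    (ae_of_all volume fun x hx => ?_) (hbound.intervalIntegrable u v)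
  rw [Real.norm_eq_abs, abs_mul, mul_comm]
  exact mul_le_mul_of_nonneg_right (hg x (Ioc_subset_Icc_self hx)) (abs_nonneg _)

theorem simpson_sub_average_eq {f f' : ℝ → ℝ} {a b : ℝ} (hab : a ≠ b)
    (hf : ∀ x ∈ uIcc a b, HasDerivAt f (f' x) x) (hf' : IntervalIntegrable f' volume a b) :
    1 / 6 * (f a + 4 * f ((a + b) / 2) + f b) - 1 / (b - a) * ∫ x in a..b, f x =
      1 / (b - a) * ((∫ x in a..(a + b) / 2, (x - (5 * a + b) / 6) * f' x) +
        ∫ x in (a + b) / 2..b, (x - (a + 5 * b) / 6) * f' x) := by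
  have hm : (a + b) / 2 ∈ uIcc a b := by
    rcases le_total a b with h | h
    exacts [mem_uIcc_of_le (by linarith) (by linarith), mem_uIcc_of_ge (by linarith) (by linarith)]
  have hleft := uIcc_subset_uIcc_left hm
  have hright := uIcc_subset_uIcc_right hm
  have hfi : IntervalIntegrable f volume a b :=
    ContinuousOn.intervalIntegrable fun x hx => (hf x hx).continuousAt.continuousWithinAt
  rw [integral_sub_mul_deriv_eq (fun x hx => hf x (hleft hx)) (hf'.mono_set hleft),
    integral_sub_mul_deriv_eq (fun x hx => hf x (hright hx)) (hf'.mono_set hright),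
    ← intervalIntegral.integral_add_adjacent_intervals (hfi.mono_set hleft) (hfi.mono_set hright)]
  field_simp [sub_ne_zero.2 hab.symm]
  ring

theorem stmt_6 (f f' : ℝ → ℝ) (a b q c d : ℝ) (hab : a < b) (hq : 1 ≤ q)
    (hca : c < a) (hbd : b < d)
    (hf : ∀ x ∈ Set.Ioo c d, HasDerivAt f (f' x) x)
    (hint : IntervalIntegrable f' volume a b)
    (hqc : ∀ x ∈ Set.Icc a b, ∀ y ∈ Set.Icc a b, ∀ α ∈ Set.Icc (0:ℝ) 1,
      |f' (α * x + (1 - α) * y)| ^ q ≤ max (|f' x| ^ q) (|f' y| ^ q)) :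
    |(1 / 6) * (f a + 4 * f ((a + b) / 2) + f b) - (1 / (b - a)) * ∫ x in a..b, f x|
      ≤ 5 * (b - a) / 72 *
          ((max (|f' a| ^ q) (|f' ((a + b) / 2)| ^ q)) ^ (1 / q)
            + (max (|f' b| ^ q) (|f' ((a + b) / 2)| ^ q)) ^ (1 / q)) := by
  have hderiv : ∀ x ∈ uIcc a b, HasDerivAt f (f' x) x := by
    intro x hx
    rw [uIcc_of_le hab.le] at hx
    exact hf x ⟨hca.trans_le hx.1, hx.2.trans_lt hbd⟩
  have hquasi : QuasiconvexOn ℝ (Icc a b) fun x => |f' x| ^ q := by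
    refine quasiconvexOn_iff_le_max.2 ⟨convex_Icc a b, fun x hx y hy α β hα hβ hαβ => ?_⟩
    obtain rfl : β = 1 - α := by linarith
    exact hqc x hx y hy α ⟨hα, by linarith⟩
  have ha : a ∈ Icc a b := left_mem_Icc.2 hab.le
  have hb : b ∈ Icc a b := right_mem_Icc.2 hab.le
  have hm : (a + b) / 2 ∈ Icc a b := ⟨by linarith, by linarith⟩
  have hleft := abs_integral_sub_mul_le (p := (5 * a + b) / 6) hm.1 fun x hx =>
    abs_le_max_rpow_of_quasiconvexOn (by linarith) hquasi ha hm (Icc_subset_uIcc hx)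
  have hright := abs_integral_sub_mul_le (p := (a + 5 * b) / 6) hm.2 fun x hx =>
    abs_le_max_rpow_of_quasiconvexOn (by linarith) hquasi hb hm (Icc_subset_uIcc' hx)
  have hkernel_left : ∫ x in a..(a + b) / 2, |x - (5 * a + b) / 6| = 5 * (b - a) ^ 2 / 72 := by
    rw [integral_abs_sub_of_mem_Icc ⟨by linarith, by linarith⟩]; ring
  have hkernel_right : ∫ x in (a + b) / 2..b, |x - (a + 5 * b) / 6| = 5 * (b - a) ^ 2 / 72 := by
    rw [integral_abs_sub_of_mem_Icc ⟨by linarith, by linarith⟩]; ring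
  rw [hkernel_left] at hleft
  rw [hkernel_right] at hright
  rw [simpson_sub_average_eq hab.ne hderiv hint, abs_mul, abs_of_pos (by simpa using hab)]
  calc _ ≤ 1 / (b - a) * (_ * (5 * (b - a) ^ 2 / 72) + _ * (5 * (b - a) ^ 2 / 72)) := by
        gcongr; exact (abs_add_le _ _).trans (add_le_add hleft hright)
    _ = _ := by field_simp
end

section
/- Let f be differentiable on an open interval containing [a,b] (a < b) with f' integrable, q ≥ 1, and suppose |f'|^q is quasi-convex on [a,b]. Then the midpoint inequality holds: |f((a+b)/2) − (1/(b−a)) ∫_a^b f(x) dx| ≤ ((b−a)/8) [ (max{|f'(a)|^q, |f'((a+b)/2)|^q})^(1/q) + (max{|f'(b)|^q, |f'((a+b)/2)|^q})^(1/q) ]. -/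
/-!
Integrating by parts against the Peano kernel `t - a` on `[a, m]` and `t - b` on `[m, b]`,
`m = (a + b) / 2`, expresses `(b - a) f(m) - ∫ₐᵇ f` as `∫ₐᵐ (t - a) f' + ∫ₘᵇ (t - b) f'`.
Quasi-convexity of `|f'|^q` bounds `|f'|` on `[a, m]` by `(max {|f' a|^q, |f' m|^q})^(1/q)`
and on `[m, b]` by the analogous constant, and each kernel has `L¹` norm `(b - a)² / 8`.
-/

open MeasureTheory Set

theorem QuasiconvexOn.le_max_of_mem_segment {𝕜 E β : Type*} [Semiring 𝕜] [PartialOrder 𝕜]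
    [AddCommMonoid E] [Module 𝕜 E] [LinearOrder β] {s : Set E} {g : E → β} {x y t : E}
    (hg : QuasiconvexOn 𝕜 s g) (hx : x ∈ s) (hy : y ∈ s) (ht : t ∈ segment 𝕜 x y) :
    g t ≤ max (g x) (g y) :=
  ((hg _).segment_subset ⟨hx, le_max_left _ _⟩ ⟨hy, le_max_right _ _⟩ ht).2

theorem abs_le_max_rpow_inv_of_quasiconvexOn {s : Set ℝ} {g : ℝ → ℝ} {q x y t : ℝ}
    (hq : 0 < q) (hg : QuasiconvexOn ℝ s fun x => |g x| ^ q) (hx : x ∈ s) (hy : y ∈ s)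
    (ht : t ∈ segment ℝ x y) :
    |g t| ≤ (max (|g x| ^ q) (|g y| ^ q)) ^ (1 / q) := by
  rw [one_div, Real.le_rpow_inv_iff_of_pos (abs_nonneg _)
    (le_max_of_le_left (by positivity)) hq]
  exact hg.le_max_of_mem_segment hx hy ht

theorem mul_sub_integral_eq_integral_sub_mul_deriv {f f' : ℝ → ℝ} {a m b : ℝ}
    (ham : a ≤ m) (hmb : m ≤ b) (hf : ∀ x ∈ Icc a b, HasDerivAt f (f' x) x)
    (hint : IntervalIntegrable f' volume a b) :
    (b - a) * f m - ∫ x in a..b, f x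
      = (∫ t in a..m, (t - a) * f' t) + ∫ t in m..b, (t - b) * f' t := by
  have hsub_left : uIcc a m ⊆ uIcc a b := by
    rw [uIcc_of_le ham, uIcc_of_le (ham.trans hmb)]; exact Icc_subset_Icc_right hmb
  have hsub_right : uIcc m b ⊆ uIcc a b := by
    rw [uIcc_of_le hmb, uIcc_of_le (ham.trans hmb)]; exact Icc_subset_Icc_left ham
  have hf' : ∀ x ∈ uIcc a b, HasDerivAt f (f' x) x := by
    rw [uIcc_of_le (ham.trans hmb)]; exact hf
  have hcont : ContinuousOn f (uIcc a b) := fun x hx =>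
    (hf' x hx).continuousAt.continuousWithinAt
  have parts_left := intervalIntegral.integral_mul_deriv_eq_deriv_mul
    (u := fun t => t - a) (u' := fun _ => 1) (fun x _ => (hasDerivAt_id x).sub_const a)
    (fun x hx => hf' x (hsub_left hx)) intervalIntegrable_const (hint.mono_set hsub_left)
  have parts_right := intervalIntegral.integral_mul_deriv_eq_deriv_mul
    (u := fun t => t - b) (u' := fun _ => 1) (fun x _ => (hasDerivAt_id x).sub_const b)
    (fun x hx => hf' x (hsub_right hx)) intervalIntegrable_const (hint.mono_set hsub_right)
  simp only [one_mul, sub_self, zero_mul] at parts_left parts_right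
  rw [parts_left, parts_right, ← intervalIntegral.integral_add_adjacent_intervals
    ((hcont.mono hsub_left).intervalIntegrable) ((hcont.mono hsub_right).intervalIntegrable)]
  ring

theorem abs_integral_sub_left_mul_le {g : ℝ → ℝ} {x y M : ℝ} (hxy : x ≤ y)
    (hg : ∀ t ∈ Icc x y, |g t| ≤ M) :
    |∫ t in x..y, (t - x) * g t| ≤ (y - x) ^ 2 / 2 * M := by
  calc |∫ t in x..y, (t - x) * g t| = ‖∫ t in x..y, (t - x) * g t‖ := (Real.norm_eq_abs _).symm
    _ ≤ ∫ t in x..y, (t - x) * M := by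
        refine intervalIntegral.norm_integral_le_of_norm_le hxy (ae_of_all _ fun t ht => ?_)
          ((continuous_sub_right x).mul continuous_const |>.intervalIntegrable _ _)
        rw [Real.norm_eq_abs, abs_mul, abs_of_nonneg (sub_nonneg.2 ht.1.le)]
        exact mul_le_mul_of_nonneg_left (hg t (Ioc_subset_Icc_self ht)) (sub_nonneg.2 ht.1.le)
    _ = (y - x) ^ 2 / 2 * M := by
        rw [intervalIntegral.integral_mul_const, intervalIntegral.integral_comp_sub_right
          (fun t => t), integral_id]
        ring

theorem abs_integral_sub_right_mul_le {g : ℝ → ℝ} {x y M : ℝ} (hxy : x ≤ y)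
    (hg : ∀ t ∈ Icc x y, |g t| ≤ M) :
    |∫ t in x..y, (t - y) * g t| ≤ (y - x) ^ 2 / 2 * M := by
  calc |∫ t in x..y, (t - y) * g t| = ‖∫ t in x..y, (t - y) * g t‖ := (Real.norm_eq_abs _).symm
    _ ≤ ∫ t in x..y, (y - t) * M := by
        refine intervalIntegral.norm_integral_le_of_norm_le hxy (ae_of_all _ fun t ht => ?_)
          ((continuous_sub_left y).mul continuous_const |>.intervalIntegrable _ _)
        rw [Real.norm_eq_abs, abs_mul, abs_sub_comm, abs_of_nonneg (sub_nonneg.2 ht.2)]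
        exact mul_le_mul_of_nonneg_left (hg t (Ioc_subset_Icc_self ht)) (sub_nonneg.2 ht.2)
    _ = (y - x) ^ 2 / 2 * M := by
        rw [intervalIntegral.integral_mul_const, intervalIntegral.integral_comp_sub_left
          (fun t => t), integral_id]
        ring

theorem stmt_7 (f f' : ℝ → ℝ) (a b q c d : ℝ) (hab : a < b) (hq : 1 ≤ q)
    (hca : c < a) (hbd : b < d)
    (hf : ∀ x ∈ Set.Ioo c d, HasDerivAt f (f' x) x)
    (hint : IntervalIntegrable f' volume a b)
    (hqc : ∀ x ∈ Set.Icc a b, ∀ y ∈ Set.Icc a b, ∀ α ∈ Set.Icc (0:ℝ) 1,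
      |f' (α * x + (1 - α) * y)| ^ q ≤ max (|f' x| ^ q) (|f' y| ^ q)) :
    |f ((a + b) / 2) - (1 / (b - a)) * ∫ x in a..b, f x|
      ≤ (b - a) / 8 *
          ((max (|f' a| ^ q) (|f' ((a + b) / 2)| ^ q)) ^ (1 / q)
            + (max (|f' b| ^ q) (|f' ((a + b) / 2)| ^ q)) ^ (1 / q)) := by
  set m := (a + b) / 2
  have ham : a ≤ m := by simp only [m]; linarith
  have hmb : m ≤ b := by simp only [m]; linarith
  have hquasi : QuasiconvexOn ℝ (Icc a b) fun x => |f' x| ^ q := by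
    refine quasiconvexOn_iff_le_max.2 ⟨convex_Icc a b, fun x hx y hy α β hα _ hαβ => ?_⟩
    obtain rfl : β = 1 - α := by linarith
    exact hqc x hx y hy α ⟨hα, by linarith⟩
  have hbound {x y} (hx : x ∈ Icc a b) (hy : y ∈ Icc a b) (hxy : x ≤ y) (t) (ht : t ∈ Icc x y) :=
    abs_le_max_rpow_inv_of_quasiconvexOn (by linarith) hquasi hx hy ((segment_eq_Icc hxy).symm ▸ ht)
  have hmem : m ∈ Icc a b := ⟨ham, hmb⟩
  have hleft := abs_integral_sub_left_mul_le ham (hbound (left_mem_Icc.2 hab.le) hmem ham)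
  have hright := abs_integral_sub_right_mul_le hmb (hbound hmem (right_mem_Icc.2 hab.le) hmb)
  rw [max_comm] at hright
  have hba : 0 < b - a := sub_pos.2 hab
  rw [show f m - 1 / (b - a) * ∫ x in a..b, f x = ((b - a) * f m - ∫ x in a..b, f x) / (b - a) by
    field_simp, mul_sub_integral_eq_integral_sub_mul_deriv ham hmb
      (fun x hx => hf x ⟨hca.trans_le hx.1, hx.2.trans_lt hbd⟩) hint,
    abs_div, abs_of_pos hba, div_le_iff₀ hba]
  refine (abs_add_le _ _).trans ((add_le_add hleft hright).trans_eq ?_)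
  simp only [m]
  ring
end

section
/- Let a < b be real numbers, n ∈ ℕ with n ≥ 2, θ, λ ∈ [0,1], and q > 1 with 1/p + 1/q = 1. Then |(1−θ)(λ a^n + (1−λ) b^n) + θ ((1−λ)a + λb)^n − (b^(n+1) − a^(n+1))/((n+1)(b−a))| ≤ (b−a) ((θ^(p+1) + (1−θ)^(p+1))/(p+1))^(1/p) n [ λ² (max{|a|^((n−1)q), |(1−λ)a + λb|^((n−1)q)})^(1/q) + (1−λ)² (max{|b|^((n−1)q), |(1−λ)a + λb|^((n−1)q)})^(1/q) ]. -/
/-!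
Integrating `t ↦ (t - θ) f(t c + (1 - t) d)` by parts gives, for `f` with continuous derivative,
`(1 - θ) f c + θ f d = ∫₀¹ f(t c + (1 - t) d) + (c - d) ∫₀¹ (t - θ) f'(t c + (1 - t) d)`.
Apply this on the segments from `x = (1 - λ) a + λ b` to `a` and to `b` and weight by `λ`, `1 - λ`:
since `x - a = λ (b - a)` and `b - x = (1 - λ)(b - a)`, the two mean values add up to the mean of
`f` over `[a, b]`, and what remains is `(b - a)` times `(1 - λ)² J_b - λ² J_a` with kernel
integrals `J`. Each `J` is at most `sup |f'| · ∫₀¹ |t - θ|`, and by Jensen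
`∫₀¹ |t - θ| ≤ (∫₀¹ |t - θ|^p)^(1/p) = ((θ^(p+1) + (1 - θ)^(p+1)) / (p + 1))^(1/p)`.
For `f = (·)^n` the supremum of `|f'|` between `c` and `d` is at most `n max(|c|, |d|)^(n-1)`.
-/

open intervalIntegral MeasureTheory Set

lemma convex_comb_mem_uIcc {c d t : ℝ} (ht : t ∈ Icc (0:ℝ) 1) :
    t * c + (1 - t) * d ∈ uIcc c d := by
  rw [← segment_eq_uIcc]
  exact ⟨t, 1 - t, ht.1, by linarith [ht.2], by ring, rfl⟩

lemma abs_le_max_abs_abs_of_mem_uIcc {c d y : ℝ} (hy : y ∈ uIcc c d) : |y| ≤ max |c| |d| := by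
  rcases le_total c d with h | h
  · rw [uIcc_of_le h] at hy
    exact abs_le_max_abs_abs hy.1 hy.2
  · rw [uIcc_of_ge h] at hy
    exact max_comm |d| |c| ▸ abs_le_max_abs_abs hy.1 hy.2

lemma max_rpow_mul_rpow_one_div {A B r q : ℝ} (hA : 0 ≤ A) (hB : 0 ≤ B) (hr : 0 ≤ r)
    (hq : 0 < q) : (max (A ^ (r * q)) (B ^ (r * q))) ^ (1 / q) = max A B ^ r := by
  rw [← Real.rpow_max hA hB (by positivity), ← Real.rpow_mul (le_max_of_le_left hA),
    mul_assoc, mul_one_div_cancel hq.ne', mul_one]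

lemma integral_zero_one_le_integral_rpow_rpow_one_div {f : ℝ → ℝ} (hf : Continuous f)
    (hf0 : ∀ t, 0 ≤ f t) {p : ℝ} (hp : 1 ≤ p) : ∫ t in (0:ℝ)..1, f t ≤ (∫ t in (0:ℝ)..1, f t ^ p) ^ (1 / p) := by
  let μ := volume.restrict (Ioc (0:ℝ) 1)
  have : IsProbabilityMeasure μ := ⟨by simp [μ]⟩
  have hjensen : (∫ t, f t ∂μ) ^ p ≤ ∫ t, f t ^ p ∂μ :=
    (convexOn_rpow hp).map_integral_le (Real.continuous_rpow_const (by linarith)).continuousOn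
      isClosed_Ici (ae_of_all _ hf0) (hf.integrableOn_Ioc)
      ((hf.rpow_const fun _ => Or.inr (by linarith)).integrableOn_Ioc)
  have hint0 : 0 ≤ ∫ t, f t ∂μ := integral_nonneg hf0
  rw [integral_of_le zero_le_one, integral_of_le zero_le_one]
  calc ∫ t, f t ∂μ = ((∫ t, f t ∂μ) ^ p) ^ (1 / p) := by
        rw [one_div, Real.rpow_rpow_inv hint0 (by linarith)]
    _ ≤ (∫ t, f t ^ p ∂μ) ^ (1 / p) := by gcongr

lemma integral_abs_rpow_of_nonneg {p x : ℝ} (hp : 0 ≤ p) (hx : 0 ≤ x) :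
    ∫ s in (0:ℝ)..x, |s| ^ p = x ^ (p + 1) / (p + 1) := by
  rw [integral_congr (g := fun s => s ^ p) fun s hs => by
      rw [uIcc_of_le hx] at hs; simp only [abs_of_nonneg hs.1],
    integral_rpow (Or.inl (by linarith)), Real.zero_rpow (by linarith), sub_zero]

lemma integral_abs_sub_rpow {θ p : ℝ} (hθ : θ ∈ Icc (0:ℝ) 1) (hp : 0 ≤ p) :
    ∫ t in (0:ℝ)..1, |t - θ| ^ p = (θ ^ (p + 1) + (1 - θ) ^ (p + 1)) / (p + 1) := by
  have hcont : Continuous fun s : ℝ => |s| ^ p := continuous_abs.rpow_const fun _ => Or.inr hp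
  rw [integral_comp_sub_right (fun s => |s| ^ p), zero_sub,
    ← integral_add_adjacent_intervals (b := 0) (hcont.intervalIntegrable _ _)
      (hcont.intervalIntegrable _ _),
    ← neg_zero, ← integral_comp_neg, neg_zero]
  simp only [abs_neg]
  rw [integral_abs_rpow_of_nonneg hp hθ.1,
    integral_abs_rpow_of_nonneg hp (sub_nonneg.2 hθ.2)]
  ring

theorem sub_mul_integral_comp_convex_comb (f : ℝ → ℝ) (c d : ℝ) :
    (c - d) * ∫ t in (0:ℝ)..1, f (t * c + (1 - t) * d) = ∫ x in d..c, f x := by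
  have h := smul_integral_comp_mul_add (a := 0) (b := 1) f (c - d) d
  simp only [smul_eq_mul, mul_zero, zero_add, mul_one, sub_add_cancel] at h
  rw [← h]
  congr 2
  ext t
  ring_nf

section
variable {f f' : ℝ → ℝ}

theorem convex_comb_eq_integral_add_integral_deriv (hf : ∀ x, HasDerivAt f (f' x) x)
    (hf' : Continuous f') (c d θ : ℝ) :
    (1 - θ) * f c + θ * f d =
      (∫ t in (0:ℝ)..1, f (t * c + (1 - t) * d)) +
        (c - d) * ∫ t in (0:ℝ)..1, (t - θ) * f' (t * c + (1 - t) * d) := by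
  have hfc : Continuous f := continuous_iff_continuousAt.2 fun x => (hf x).continuousAt
  have hseg : ∀ t, HasDerivAt (fun t => t * c + (1 - t) * d) (c - d) t := fun t =>
    (((hasDerivAt_id t).mul_const c).add
      (((hasDerivAt_id t).const_sub 1).mul_const d)).congr_deriv (by ring)
  have hF : ∀ t, HasDerivAt (fun t => (t - θ) * f (t * c + (1 - t) * d))
      (f (t * c + (1 - t) * d) + (c - d) * ((t - θ) * f' (t * c + (1 - t) * d))) t := fun t =>
    (((hasDerivAt_id t).sub_const θ).mul ((hf _).comp t (hseg t))).congr_deriv (by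
      simp only [id_eq, one_mul, Function.comp_apply]; ring)
  have h₁ : Continuous fun t => f (t * c + (1 - t) * d) := by fun_prop
  have h₂ : Continuous fun t => (c - d) * ((t - θ) * f' (t * c + (1 - t) * d)) := by fun_prop
  have hftc := integral_eq_sub_of_hasDerivAt (fun t _ => hF t) ((h₁.add h₂).intervalIntegrable 0 1)
  rw [intervalIntegral.integral_add (h₁.intervalIntegrable 0 1) (h₂.intervalIntegrable 0 1),
    intervalIntegral.integral_const_mul] at hftc
  rw [hftc]
  norm_num

theorem weighted_sub_average_eq (hf : ∀ x, HasDerivAt f (f' x) x) (hf' : Continuous f')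
    {a b x : ℝ} (hab : a ≠ b) (θ lam : ℝ) (hx : x = (1 - lam) * a + lam * b) :
    (1 - θ) * (lam * f a + (1 - lam) * f b) + θ * f x - (∫ y in a..b, f y) / (b - a) =
      (b - a) * ((1 - lam) ^ 2 * (∫ t in (0:ℝ)..1, (t - θ) * f' (t * b + (1 - t) * x))
        - lam ^ 2 * ∫ t in (0:ℝ)..1, (t - θ) * f' (t * a + (1 - t) * x)) := by
  have hfc : Continuous f := continuous_iff_continuousAt.2 fun x => (hf x).continuousAt
  have hA := convex_comb_eq_integral_add_integral_deriv hf hf' a x θ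
  have hB := convex_comb_eq_integral_add_integral_deriv hf hf' b x θ
  set Ia := ∫ t in (0:ℝ)..1, f (t * a + (1 - t) * x)
  set Ib := ∫ t in (0:ℝ)..1, f (t * b + (1 - t) * x)
  set Ja := ∫ t in (0:ℝ)..1, (t - θ) * f' (t * a + (1 - t) * x)
  set Jb := ∫ t in (0:ℝ)..1, (t - θ) * f' (t * b + (1 - t) * x)
  have havg : (∫ y in a..b, f y) / (b - a) = lam * Ia + (1 - lam) * Ib := by
    rw [div_eq_iff (sub_ne_zero.2 hab.symm), ← integral_add_adjacent_intervals
      (hfc.intervalIntegrable (μ := volume) a x) (hfc.intervalIntegrable x b), integral_symm x a,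
      ← sub_mul_integral_comp_convex_comb f a x, ← sub_mul_integral_comp_convex_comb f b x]
    linear_combination (Ia - Ib) * hx
  rw [havg]
  linear_combination lam * hA + (1 - lam) * hB - (lam * Ja + (1 - lam) * Jb) * hx

theorem abs_integral_sub_mul_comp_convex_comb_le {g : ℝ → ℝ} {c d θ p M : ℝ}
    (hθ : θ ∈ Icc (0:ℝ) 1) (hp : 1 ≤ p) (hM : ∀ y ∈ uIcc c d, |g y| ≤ M) :
    |∫ t in (0:ℝ)..1, (t - θ) * g (t * c + (1 - t) * d)|
      ≤ ((θ ^ (p + 1) + (1 - θ) ^ (p + 1)) / (p + 1)) ^ (1 / p) * M := by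
  have hcont : Continuous fun t : ℝ => |t - θ| := by fun_prop
  have hM0 : 0 ≤ M := (abs_nonneg _).trans (hM c left_mem_uIcc)
  calc |∫ t in (0:ℝ)..1, (t - θ) * g (t * c + (1 - t) * d)|
      ≤ ∫ t in (0:ℝ)..1, |t - θ| * M := by
        rw [← Real.norm_eq_abs]
        refine norm_integral_le_of_norm_le zero_le_one (ae_of_all _ fun t ht => ?_)
          (Continuous.intervalIntegrable (by fun_prop) _ _)
        rw [Real.norm_eq_abs, abs_mul]
        gcongr
        exact hM _ (convex_comb_mem_uIcc (Ioc_subset_Icc_self ht))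
    _ = (∫ t in (0:ℝ)..1, |t - θ|) * M := integral_mul_const _ _
    _ ≤ (∫ t in (0:ℝ)..1, |t - θ| ^ p) ^ (1 / p) * M := by
        gcongr
        exact integral_zero_one_le_integral_rpow_rpow_one_div hcont (fun _ => abs_nonneg _) hp
    _ = _ := by rw [integral_abs_sub_rpow hθ (by linarith)]

theorem abs_weighted_sub_average_le (hf : ∀ x, HasDerivAt f (f' x) x) (hf' : Continuous f')
    {a b x θ lam p M₁ M₂ : ℝ} (hab : a < b) (hθ : θ ∈ Icc (0:ℝ) 1) (hp : 1 ≤ p)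
    (hx : x = (1 - lam) * a + lam * b)
    (hM₁ : ∀ y ∈ uIcc a x, |f' y| ≤ M₁) (hM₂ : ∀ y ∈ uIcc b x, |f' y| ≤ M₂) :
    |(1 - θ) * (lam * f a + (1 - lam) * f b) + θ * f x - (∫ y in a..b, f y) / (b - a)|
      ≤ (b - a) * ((θ ^ (p + 1) + (1 - θ) ^ (p + 1)) / (p + 1)) ^ (1 / p)
          * (lam ^ 2 * M₁ + (1 - lam) ^ 2 * M₂) := by
  rw [weighted_sub_average_eq hf hf' hab.ne θ lam hx, abs_mul, abs_of_pos (sub_pos.2 hab),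
    mul_assoc]
  gcongr
  calc _ ≤ |(1 - lam) ^ 2 * ∫ t in (0:ℝ)..1, (t - θ) * f' (t * b + (1 - t) * x)|
        + |lam ^ 2 * ∫ t in (0:ℝ)..1, (t - θ) * f' (t * a + (1 - t) * x)| := abs_sub _ _
    _ = (1 - lam) ^ 2 * |∫ t in (0:ℝ)..1, (t - θ) * f' (t * b + (1 - t) * x)|
        + lam ^ 2 * |∫ t in (0:ℝ)..1, (t - θ) * f' (t * a + (1 - t) * x)| := by
      rw [abs_mul, abs_mul, abs_sq, abs_sq]
    _ ≤ (1 - lam) ^ 2 * (((θ ^ (p + 1) + (1 - θ) ^ (p + 1)) / (p + 1)) ^ (1 / p) * M₂)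
        + lam ^ 2 * (((θ ^ (p + 1) + (1 - θ) ^ (p + 1)) / (p + 1)) ^ (1 / p) * M₁) := by
      gcongr
      · exact abs_integral_sub_mul_comp_convex_comb_le hθ hp hM₂
      · exact abs_integral_sub_mul_comp_convex_comb_le hθ hp hM₁
    _ = _ := by ring

end

lemma abs_natCast_mul_pow_pred_le {c d y : ℝ} (n : ℕ) (hy : y ∈ uIcc c d) :
    |(n : ℝ) * y ^ (n - 1)| ≤ n * max |c| |d| ^ (n - 1) := by
  rw [abs_mul, Nat.abs_cast, abs_pow]
  gcongr
  exact abs_le_max_abs_abs_of_mem_uIcc hy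

theorem stmt_14_general (a b θ lam p q : ℝ) (n : ℕ) (hab : a < b) (hn : 2 ≤ n)
    (hθ : θ ∈ Set.Icc (0:ℝ) 1) (hq : 1 < q) (hpq : 1 / p + 1 / q = 1) :
    |(1 - θ) * (lam * a ^ n + (1 - lam) * b ^ n) + θ * ((1 - lam) * a + lam * b) ^ n
        - (b ^ (n + 1) - a ^ (n + 1)) / ((n + 1) * (b - a))|
      ≤ (b - a) * ((θ ^ (p + 1) + (1 - θ) ^ (p + 1)) / (p + 1)) ^ (1 / p) * n *
          (lam ^ 2 * (max (|a| ^ (((n : ℝ) - 1) * q)) (|(1 - lam) * a + lam * b| ^ (((n : ℝ) - 1) * q))) ^ (1 / q)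
            + (1 - lam) ^ 2 * (max (|b| ^ (((n : ℝ) - 1) * q)) (|(1 - lam) * a + lam * b| ^ (((n : ℝ) - 1) * q))) ^ (1 / q)) := by
  have hp : 1 ≤ p :=
    (Real.holderConjugate_iff.2 ⟨hq, by rw [← one_div, ← one_div, add_comm, hpq]⟩).symm.lt.le
  have hn1 : (0 : ℝ) ≤ (n : ℝ) - 1 := by
    have : (2 : ℝ) ≤ n := by exact_mod_cast hn
    linarith
  set x := (1 - lam) * a + lam * b with hx
  rw [max_rpow_mul_rpow_one_div (abs_nonneg a) (abs_nonneg x) hn1 (by linarith),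
    max_rpow_mul_rpow_one_div (abs_nonneg b) (abs_nonneg x) hn1 (by linarith),
    ← Nat.cast_pred (by omega), Real.rpow_natCast, Real.rpow_natCast]
  have key := abs_weighted_sub_average_le (hasDerivAt_pow n) (by fun_prop) hab hθ hp hx
    (fun _ => abs_natCast_mul_pow_pred_le n) (fun _ => abs_natCast_mul_pow_pred_le n)
  refine Eq.trans_le ?_ (key.trans_eq ?_)
  · rw [integral_pow, div_div]
  · ring

theorem stmt_14 (a b θ lam p q : ℝ) (n : ℕ) (hab : a < b) (hn : 2 ≤ n)
    (hθ : θ ∈ Set.Icc (0:ℝ) 1) (hlam : lam ∈ Set.Icc (0:ℝ) 1)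
    (hq : 1 < q) (hpq : 1 / p + 1 / q = 1) :
    |(1 - θ) * (lam * a ^ n + (1 - lam) * b ^ n) + θ * ((1 - lam) * a + lam * b) ^ n
        - (b ^ (n + 1) - a ^ (n + 1)) / ((n + 1) * (b - a))|
      ≤ (b - a) * ((θ ^ (p + 1) + (1 - θ) ^ (p + 1)) / (p + 1)) ^ (1 / p) * n *
          (lam ^ 2 * (max (|a| ^ (((n : ℝ) - 1) * q)) (|(1 - lam) * a + lam * b| ^ (((n : ℝ) - 1) * q))) ^ (1 / q)
            + (1 - lam) ^ 2 * (max (|b| ^ (((n : ℝ) - 1) * q)) (|(1 - lam) * a + lam * b| ^ (((n : ℝ) - 1) * q))) ^ (1 / q)) :=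
  stmt_14_general a b θ lam p q n hab hn hθ hq hpq
end

section
/- Let 0 < a < b, θ, λ ∈ [0,1], and q ≥ 1. Then |(1−θ)(λ/a + (1−λ)/b) + θ/((1−λ)a + λb) − (ln b − ln a)/(b−a)| ≤ (b−a)(θ² − θ + 1/2) [ λ² (max{a^(−2q), ((1−λ)a + λb)^(−2q)})^(1/q) + (1−λ)² (max{b^(−2q), ((1−λ)a + λb)^(−2q)})^(1/q) ]. -/
/-! Integrating by parts, `∫_u^v (x - m) f'(x) dx = (m - u) f(u) + (v - m) f(v) - ∫_u^v f`, and
`|f'| ≤ M` bounds the error of this two-point rule by `M ∫_u^v |x - m| = M ((m - u)² + (v - m)²) / 2`.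
For `f = x⁻¹` on `[u, v]` one may take `M = u⁻²`. Splitting `[a, b]` at `c = (1 - λ) a + λ b` and
applying this on `[a, c]` with weights `(1 - θ, θ)` and on `[c, b]` with weights `(θ, 1 - θ)` gives the
bound with `a⁻²` and `c⁻²`, which is what the two maxima reduce to because `x ↦ x ^ (-2q)` is
decreasing. -/

open Real Set intervalIntegral MeasureTheory

theorem integral_abs_sub_eq {u m v : ℝ} (hum : u ≤ m) (hmv : m ≤ v) :
    ∫ x in u..v, |x - m| = ((m - u) ^ 2 + (v - m) ^ 2) / 2 := by
  have hint : ∀ s t : ℝ, IntervalIntegrable (fun x => |x - m|) volume s t :=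
    fun s t => (by fun_prop : Continuous fun x : ℝ => |x - m|).intervalIntegrable s t
  have hleft : ∫ x in u..m, |x - m| = ∫ x in u..m, (m - x) :=
    integral_congr fun x hx => by
      rw [uIcc_of_le hum] at hx
      rw [abs_of_nonpos (by linarith [hx.2])]; ring
  have hright : ∫ x in m..v, |x - m| = ∫ x in m..v, (x - m) :=
    integral_congr fun x hx => by
      rw [uIcc_of_le hmv] at hx
      rw [abs_of_nonneg (by linarith [hx.1])]
  rw [← integral_add_adjacent_intervals (hint u m) (hint m v), hleft, hright,
    integral_comp_sub_left (fun x => x), integral_comp_sub_right (fun x => x)]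
  simp only [integral_id, sub_self]
  ring

theorem abs_sub_integral_le_of_abs_deriv_le {f f' : ℝ → ℝ} {u m v M : ℝ}
    (hum : u ≤ m) (hmv : m ≤ v) (hf : ∀ x ∈ Icc u v, HasDerivAt f (f' x) x)
    (hf' : IntervalIntegrable f' volume u v) (hM : ∀ x ∈ Icc u v, |f' x| ≤ M) :
    |(m - u) * f u + (v - m) * f v - ∫ x in u..v, f x|
      ≤ M * ((m - u) ^ 2 + (v - m) ^ 2) / 2 := by
  have huv : u ≤ v := hum.trans hmv
  have hparts : ∫ x in u..v, (x - m) * f' x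
      = (m - u) * f u + (v - m) * f v - ∫ x in u..v, f x := by
    rw [integral_mul_deriv_eq_deriv_mul (u := fun x => x - m) (u' := fun _ => 1)
      (fun x _ => (hasDerivAt_id x).sub_const m) (by rwa [uIcc_of_le huv])
      intervalIntegrable_const hf']
    simp only [one_mul]
    ring
  rw [← hparts, mul_div_assoc, ← integral_abs_sub_eq hum hmv, ← intervalIntegral.integral_const_mul]
  rw [← Real.norm_eq_abs]
  refine norm_integral_le_of_norm_le huv (Filter.Eventually.of_forall fun x hx => ?_)
    ((by fun_prop : Continuous fun x : ℝ => M * |x - m|).intervalIntegrable u v)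
  rw [Real.norm_eq_abs, abs_mul, mul_comm]
  exact mul_le_mul_of_nonneg_right (hM x (Ioc_subset_Icc_self hx)) (abs_nonneg _)

theorem abs_sub_log_sub_log_le {u m v : ℝ} (hu : 0 < u) (hum : u ≤ m) (hmv : m ≤ v) :
    |(m - u) / u + (v - m) / v - (log v - log u)|
      ≤ ((m - u) ^ 2 + (v - m) ^ 2) / (2 * u ^ 2) := by
  have hpos : ∀ x ∈ Icc u v, 0 < x := fun x hx => hu.trans_le hx.1
  have hderiv : ∀ x ∈ Icc u v, HasDerivAt (fun x : ℝ => x⁻¹) (-(x ^ 2)⁻¹) x :=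
    fun x hx => hasDerivAt_inv (hpos x hx).ne'
  have hint : IntervalIntegrable (fun x : ℝ => -(x ^ 2)⁻¹) volume u v := by
    refine ContinuousOn.intervalIntegrable fun x hx => ?_
    rw [uIcc_of_le (hum.trans hmv)] at hx
    have := pow_ne_zero 2 (hpos x hx).ne'
    fun_prop (disch := assumption)
  have hbound : ∀ x ∈ Icc u v, |-(x ^ 2)⁻¹| ≤ (u ^ 2)⁻¹ := fun x hx => by
    rw [abs_neg, abs_of_pos (by have := hpos x hx; positivity)]
    exact inv_anti₀ (by positivity) (pow_le_pow_left₀ hu.le hx.1 2)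
  have key := abs_sub_integral_le_of_abs_deriv_le hum hmv hderiv hint hbound
  rw [integral_inv_of_pos hu (hu.trans_le (hum.trans hmv)),
    log_div (hu.trans_le (hum.trans hmv)).ne' hu.ne'] at key
  rw [div_eq_mul_inv (m - u), div_eq_mul_inv (v - m)]
  exact key.trans_eq (by ring)

theorem max_rpow_neg_two_mul_rpow_one_div {x y q : ℝ} (hx : 0 < x) (hxy : x ≤ y) (hq : 0 < q) :
    (max (x ^ (-(2 * q))) (y ^ (-(2 * q)))) ^ (1 / q) = (x ^ 2)⁻¹ := by
  have hle : y ^ (-(2 * q)) ≤ x ^ (-(2 * q)) :=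
    rpow_le_rpow_of_nonpos hx hxy (by linarith)
  rw [max_eq_left hle, ← rpow_mul hx.le, show -(2 * q) * (1 / q) = -(2 : ℕ) by field_simp; norm_num,
    rpow_neg hx.le, rpow_natCast]

theorem stmt_15 (a b θ lam q : ℝ) (ha : 0 < a) (hab : a < b)
    (hθ : θ ∈ Set.Icc (0:ℝ) 1) (hlam : lam ∈ Set.Icc (0:ℝ) 1) (hq : 1 ≤ q) :
    |(1 - θ) * (lam / a + (1 - lam) / b) + θ / ((1 - lam) * a + lam * b)
        - (Real.log b - Real.log a) / (b - a)|
      ≤ (b - a) * (θ ^ 2 - θ + 1 / 2) *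
          (lam ^ 2 * (max (a ^ (-(2 * q))) (((1 - lam) * a + lam * b) ^ (-(2 * q)))) ^ (1 / q)
            + (1 - lam) ^ 2 * (max (b ^ (-(2 * q))) (((1 - lam) * a + lam * b) ^ (-(2 * q)))) ^ (1 / q)) := by
  obtain ⟨hθ0, hθ1⟩ := hθ
  obtain ⟨hl0, hl1⟩ := hlam
  set c := (1 - lam) * a + lam * b with hc
  have hac : a ≤ c := by nlinarith
  have hcb : c ≤ b := by nlinarith
  have hc0 : 0 < c := ha.trans_le hac
  have hba : 0 < b - a := sub_pos.2 hab
  rw [max_rpow_neg_two_mul_rpow_one_div ha hac (by linarith), max_comm,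
    max_rpow_neg_two_mul_rpow_one_div hc0 hcb (by linarith)]
  set m₁ := a + (1 - θ) * (c - a) with hm₁
  set m₂ := c + θ * (b - c) with hm₂
  have h₁ := abs_sub_log_sub_log_le (m := m₁) (v := c) ha (by nlinarith) (by nlinarith)
  have h₂ := abs_sub_log_sub_log_le (m := m₂) (v := b) hc0 (by nlinarith) (by nlinarith)
  have hsplit : (1 - θ) * (lam / a + (1 - lam) / b) + θ / c - (log b - log a) / (b - a)
      = (((m₁ - a) / a + (c - m₁) / c - (log c - log a))
        + ((m₂ - c) / c + (b - m₂) / b - (log b - log c))) / (b - a) := by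
    field_simp
    rw [hm₁, hm₂, hc]
    ring
  rw [hsplit, abs_div, abs_of_pos hba, div_le_iff₀ hba]
  calc _ ≤ _ := abs_add_le _ _
    _ ≤ _ := add_le_add h₁ h₂
    _ = _ := by
      rw [hm₁, hm₂, hc]
      field_simp
      ring
end
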